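/- arXiv:2012.15334 — 3 statements merged into one kernel-verified Lean document; each statement's English description precedes it below -/
import Mathlib

section
/- Let n ≥ 1, λ ∈ ℤ_{≥0}^n, and r ∈ ℤ_{≥0}^{n+2} with r_0 = r_{n+1} = 0 satisfying 2r_i ≤ r_{i-1} + r_{i+1} + λ_i and r_i + λ_{i+1} ≤ r_{i+1} + 1 for all admissible i (λ_{n+1}:=0). Suppose u is an index with r_u = 1 and r_{u+1} = 0, and λ_i = 0 for all i ≤ u. Then r_i = u − i + 1 for all 1 ≤ i ≤ u, contradicting 2r_1 ≤ r_2 + λ_1; hence no such configuration with u ≥ 1 exists. -/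
/-- Case 1 of Section 3: given `r, λ : ℕ → ℕ` with `r_0 = r_{n+1} = 0`, `λ_{n+1} = 0`,
satisfying `2 r_i ≤ r_{i-1} + r_{i+1} + λ_i` and `r_i + λ_{i+1} ≤ r_{i+1} + 1` for all
`1 ≤ i ≤ n`, and an index `u` with `1 ≤ u ≤ n`, `r_u = 1`, `r_{u+1} = 0` and `λ_i = 0`
for all `i ≤ u`, one is forced to `r_i = u − i + 1` for `1 ≤ i ≤ u`, contradicting
`2 r_1 ≤ r_0 + r_2 + λ_1`; hence no such configuration exists. -/
theorem case1_no_configuration (n u : ℕ) (r lam : ℕ → ℕ)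
    (hr0 : r 0 = 0) (hrn : r (n + 1) = 0) (hlamn : lam (n + 1) = 0)
    (h1 : ∀ i, 1 ≤ i → i ≤ n → 2 * r i ≤ r (i - 1) + r (i + 1) + lam i)
    (h2 : ∀ i, 1 ≤ i → i ≤ n → r i + lam (i + 1) ≤ r (i + 1) + 1)
    (hu1 : 1 ≤ u) (hun : u ≤ n) (hru : r u = 1) (hru1 : r (u + 1) = 0)
    (hlam : ∀ i, i ≤ u → lam i = 0) :
    False := by
  have key : ∀ k, k ≤ u → r (u - k + 1) + 1 ≤ r (u - k) ∧ k + 1 ≤ r (u - k) := by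
    intro k
    induction k with
    | zero =>
      intro _
      simp only [Nat.sub_zero]
      omega
    | succ k ih =>
      intro hk
      have ihk := ih (by omega)
      have hh := h1 (u - k) (by omega) (by omega)
      have hl : lam (u - k) = 0 := hlam _ (by omega)
      have e1 : u - k - 1 = u - (k + 1) := by omega
      have e2 : u - (k + 1) + 1 = u - k := by omega
      rw [hl, e1] at hh
      rw [e2]
      omega
  have := (key u le_rfl).2
  simp only [Nat.sub_self] at this
  omega
end

section
/- Let n = 2, γ = 2α₁ + α₂, λ with λ₁ = 7, λ₂ = 5, and ξ = 2 for all positive roots. Consider the space V of Laurent polynomials f in variables x₁₁, x₁₂, x₂₁ that are symmetric under exchanging x₁₁ ↔ x₁₂ and satisfy: x₁₁²·f is polynomial in x₁₁; x₂₁²·f is polynomial in x₂₁; deg_{x₂₁} f ≤ 0; deg_{x₁₁} f ≤ −1; z²·f(z, x₁₂, z) is a polynomial in z (with Laurent coefficients in x₁₂); f vanishes on the diagonal x₁₁ = x₁₂ = x₂₁; and f is homogeneous of the appropriate fixed degrees. Then the two functions f₁ = x₁₁⁻²x₁₂⁻²x₂₁⁻²(x₂₁² + x₁₁x₁₂ −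 x₁₂x₂₁ − x₁₁x₂₁) and f₂ = x₁₁⁻²x₁₂⁻²x₂₁⁻²(x₁₂x₂₁² + x₁₁x₂₁² − 2x₁₁x₁₂x₂₁) both lie in V and are linearly independent. -/
/-- Laurent polynomials in the three variables `x₁₁, x₁₂, x₂₁` (variables indexed by
`Fin 3` via `0 ↦ x₁₁`, `1 ↦ x₁₂`, `2 ↦ x₂₁`), realized as finitely supported functions
on the exponent lattice `Fin 3 → ℤ`. -/
abbrev Laurent3 := (Fin 3 → ℤ) →₀ ℂ

/-- The space `V` of Example 5.6: Laurent polynomials `f(x₁₁,x₁₂,x₂₁)` symmetric under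
`x₁₁ ↔ x₁₂`, with `x₁₁² f` polynomial in `x₁₁`, `x₂₁² f` polynomial in `x₂₁`,
`deg_{x₂₁} f ≤ 0`, `deg_{x₁₁} f ≤ −1`, such that `z² f(z,x₁₂,z)` is a polynomial in `z`,
`f` vanishes under the specialization `x₁₁ = x₁₂ = x₂₁`, and `f` is homogeneous. -/
def memLaurentV (f : Laurent3) : Prop :=
  (∀ m : Fin 3 → ℤ, f (m ∘ (Equiv.swap (0 : Fin 3) 1)) = f m) ∧
  (∀ m ∈ f.support, (-2 : ℤ) ≤ m 0) ∧
  (∀ m ∈ f.support, (-2 : ℤ) ≤ m 2) ∧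
  (∀ m ∈ f.support, m 2 ≤ 0) ∧
  (∀ m ∈ f.support, m 0 ≤ -1) ∧
  (∀ a b : ℤ, a < -2 →
    (∑ m ∈ f.support.filter (fun m => m 0 + m 2 = a ∧ m 1 = b), f m) = 0) ∧
  (∀ a : ℤ, (∑ m ∈ f.support.filter (fun m => m 0 + m 1 + m 2 = a), f m) = 0) ∧
  (∃ d : ℤ, ∀ m ∈ f.support, m 0 + m 1 + m 2 = d)

/-- `f₁ = x₁₁⁻²x₁₂⁻²x₂₁⁻²(x₂₁² + x₁₁x₁₂ − x₁₂x₂₁ − x₁₁x₂₁)`. -/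
noncomputable def fOne : Laurent3 :=
  Finsupp.single ![(-2 : ℤ), -2, 0] 1 + Finsupp.single ![(-1 : ℤ), -1, -2] 1
    - Finsupp.single ![(-2 : ℤ), -1, -1] 1 - Finsupp.single ![(-1 : ℤ), -2, -1] 1

/-- `f₂ = x₁₁⁻²x₁₂⁻²x₂₁⁻²(x₁₂x₂₁² + x₁₁x₂₁² − 2x₁₁x₁₂x₂₁)`. -/
noncomputable def fTwo : Laurent3 :=
  Finsupp.single ![(-2 : ℤ), -1, 0] 1 + Finsupp.single ![(-1 : ℤ), -2, 0] 1
    - Finsupp.single ![(-1 : ℤ), -1, -1] 2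


/-!
Every condition defining `V` is either a condition on the support of `f` (pole orders, degree
bounds, homogeneity), invariance under the linear map induced by `x₁₁ ↔ x₁₂`, or the vanishing
of a linear functional of the coefficients (the coefficients of `f(z, x₁₂, z)` and the value of
`f` on the diagonal). So membership of `f₁` and `f₂` is a finite check on their four resp. three
monomials. They are independent because `x₁₁⁻²x₁₂⁻²` occurs in `f₁` but not in `f₂`, while
`x₁₁⁻²x₁₂⁻¹` occurs in `f₂`.
-/

open Finsupp

namespace Finsupp

variable {α : Type*}

theorem apply_eq_of_mapDomain_eq {M : Type*} [AddCommMonoid M] {g : α → α}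
    (hg : Function.Injective g) {f : α →₀ M} (h : mapDomain g f = f) (a : α) :
    f (g a) = f a := by
  rw [← mapDomain_apply hg f a, h]

theorem sum_support_filter_eq_linearCombination {R : Type*} [Semiring R] (f : α →₀ R)
    (p : α → Prop) [DecidablePred p] :
    ∑ a ∈ f.support.filter p, f a = linearCombination R (fun a ↦ if p a then 1 else 0) f := by
  rw [Finset.sum_filter, linearCombination_apply]
  exact Finset.sum_congr rfl fun a _ ↦ by simp

end Finsupp

theorem LinearIndependent.pair_of_apply {α K : Type*} [Field K] {f g : α →₀ K} {a b : α}
    (hfa : f a ≠ 0) (hga : g a = 0) (hgb : g b ≠ 0) : LinearIndependent K ![f, g] := by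
  refine LinearIndependent.pair_iff.mpr fun s t hst ↦ ?_
  have hs : s = 0 := by simpa [hga, hfa] using DFunLike.congr_fun hst a
  subst hs
  simpa [hgb] using DFunLike.congr_fun hst b

theorem vecCons_comp_swap_zero_one {R : Type*} (u v w : R) :
    ![u, v, w] ∘ Equiv.swap (0 : Fin 3) 1 = ![v, u, w] := by
  funext i
  fin_cases i <;> rfl

theorem memLaurentV_of_mem_supported {f : Laurent3} (d : ℤ)
    (hsymm : mapDomain (· ∘ Equiv.swap (0 : Fin 3) 1) f = f)
    (hsupp : f ∈ supported ℂ ℂ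
      {m | -2 ≤ m 0 ∧ m 0 ≤ -1 ∧ -2 ≤ m 2 ∧ m 2 ≤ 0 ∧ m 0 + m 1 + m 2 = d})
    (hpole : ∀ a b : ℤ, a < -2 →
      linearCombination ℂ (fun m ↦ if m 0 + m 2 = a ∧ m 1 = b then (1 : ℂ) else 0) f = 0)
    (hdiag : ∀ a : ℤ,
      linearCombination ℂ (fun m ↦ if m 0 + m 1 + m 2 = a then (1 : ℂ) else 0) f = 0) :
    memLaurentV f := by
  have hswap : Function.Injective fun m : Fin 3 → ℤ ↦ m ∘ Equiv.swap (0 : Fin 3) 1 :=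
    (Equiv.swap (0 : Fin 3) 1).surjective.injective_comp_right
  rw [mem_supported] at hsupp
  simp only [memLaurentV, sum_support_filter_eq_linearCombination]
  exact ⟨apply_eq_of_mapDomain_eq hswap hsymm, fun m hm ↦ (hsupp hm).1,
    fun m hm ↦ (hsupp hm).2.2.1, fun m hm ↦ (hsupp hm).2.2.2.1, fun m hm ↦ (hsupp hm).2.1,
    hpole, hdiag, d, fun m hm ↦ (hsupp hm).2.2.2.2⟩

theorem memLaurentV_fOne : memLaurentV fOne := by
  refine memLaurentV_of_mem_supported (-4) ?_ ?_ ?_ ?_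
  · simp only [fOne, mapDomain_add, mapDomain_sub, mapDomain_single, vecCons_comp_swap_zero_one]
    abel
  · refine sub_mem (sub_mem (add_mem ?_ ?_) ?_) ?_ <;> exact single_mem_supported ℂ _ (by decide)
  · intro a b _
    simp [fOne]
    grind
  · intro a
    simp [fOne]
    grind

theorem memLaurentV_fTwo : memLaurentV fTwo := by
  refine memLaurentV_of_mem_supported (-3) ?_ ?_ ?_ ?_
  · simp only [fTwo, mapDomain_add, mapDomain_sub, mapDomain_single, vecCons_comp_swap_zero_one]
    abel
  · refine sub_mem (add_mem ?_ ?_) ?_ <;> exact single_mem_supported ℂ _ (by decide)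
  · intro a b ha
    simp [fTwo]
    grind
  · intro a
    simp [fTwo]
    grind

/-- Example 5.6: `f₁` and `f₂` both lie in `V` and are linearly independent. -/
theorem fOne_fTwo_mem_and_independent :
    memLaurentV fOne ∧ memLaurentV fTwo ∧ LinearIndependent ℂ ![fOne, fTwo] :=
  ⟨memLaurentV_fOne, memLaurentV_fTwo,
    .pair_of_apply (a := ![-2, -2, 0]) (b := ![-2, -1, 0]) (by simp [fOne]) (by simp [fTwo])
      (by simp [fTwo])⟩
end

section
/- For any sequence 1 ≤ i₁ < ⋯ < i_k ≤ n and a₁ ∈ q^ℤ with a_{j+1} = a_j q^{±(i_{j+1}−i_j+2)} and alternating signs (if a_{j+1} = a_j q^{+(i_{j+1}-i_j+2)} then a_{j+2} = a_{j+1} q^{−(i_{j+2}−i_{j+1}+2)}), there exists a height function κ: {1,…,n} → ℤ with |κ(i+1)−κ(i)| ≤ 1, with equality at sinks and sources, such that i₁, i₃, i₅, … are sinks of the orientation Q_κ and i₂, i₄, … are sources (or vice versa), and a₁ = q^{κ(i₁)}. -/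
/-- Vertex `m` is a sink of the quiver `Q_κ` on `{1,…,n}`: all adjacent heights are
strictly smaller (boundary edges are absent). -/
def IsSinkAt (n : ℕ) (κ : ℕ → ℤ) (m : ℕ) : Prop :=
  (m = 1 ∨ κ (m - 1) < κ m) ∧ (m = n ∨ κ (m + 1) < κ m)

/-- Vertex `m` is a source of the quiver `Q_κ` on `{1,…,n}`. -/
def IsSourceAt (n : ℕ) (κ : ℕ → ℤ) (m : ℕ) : Prop :=
  (m = 1 ∨ κ m < κ (m - 1)) ∧ (m = n ∨ κ m < κ (m + 1))

/-- Given `1 ≤ i₁ < ⋯ < i_k ≤ n` and exponents `a_j ∈ ℤ` (for `a_j = q^{a_j}`) with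
`a_{j+1} = a_j ± (i_{j+1} − i_j + 2)` and alternating signs, there is a height function
`κ : {1,…,n} → ℤ` with `|κ(i+1) − κ(i)| ≤ 1`, `κ(i₁) = a₁`, such that `i₁, i₃, …` are
sinks of `Q_κ` and `i₂, i₄, …` are sources, or vice versa. -/
theorem exists_height_function (n k : ℕ) (hk : 1 ≤ k) (i : ℕ → ℕ) (a : ℕ → ℤ)
    (hmono : ∀ j, j + 1 < k → i j < i (j + 1))
    (h1 : 1 ≤ i 0) (hn : i (k - 1) ≤ n)
    (hstep : ∀ j, j + 1 < k →
      a (j + 1) = a j + ((i (j + 1) : ℤ) - (i j : ℤ) + 2) ∨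
      a (j + 1) = a j - ((i (j + 1) : ℤ) - (i j : ℤ) + 2))
    (halt : ∀ j, j + 2 < k →
      ((a (j + 1) = a j + ((i (j + 1) : ℤ) - (i j : ℤ) + 2) →
          a (j + 2) = a (j + 1) - ((i (j + 2) : ℤ) - (i (j + 1) : ℤ) + 2)) ∧
        (a (j + 1) = a j - ((i (j + 1) : ℤ) - (i j : ℤ) + 2) →
          a (j + 2) = a (j + 1) + ((i (j + 2) : ℤ) - (i (j + 1) : ℤ) + 2)))) :
    ∃ κ : ℕ → ℤ,
      (∀ m, 1 ≤ m → m < n → |κ (m + 1) - κ m| ≤ 1) ∧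
      κ (i 0) = a 0 ∧
      (((∀ j, j < k → j % 2 = 0 → IsSinkAt n κ (i j)) ∧
          (∀ j, j < k → j % 2 = 1 → IsSourceAt n κ (i j))) ∨
        ((∀ j, j < k → j % 2 = 0 → IsSourceAt n κ (i j)) ∧
          (∀ j, j < k → j % 2 = 1 → IsSinkAt n κ (i j)))) := by
  classical
  -- slope between m and m+1
  set s : ℕ → ℤ :=
    fun m => (-1 : ℤ) ^ (((Finset.range k).filter (fun j => i j ≤ m)).card) with hs
  set κ : ℕ → ℤ :=
    fun m => a 0 + (∑ t ∈ Finset.range m, s t) - ∑ t ∈ Finset.range (i 0), s t with hκ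
  -- strict monotonicity of the indices
  have imono : ∀ j' j, j' < j → j < k → i j' < i j := by
    intro j' j h hjk
    induction j with
    | zero => omega
    | succ j ih =>
      rcases Nat.lt_succ_iff_lt_or_eq.mp h with h' | h'
      · exact (ih h' (by omega)).trans (hmono j hjk)
      · subst h'; exact hmono j' hjk
  have hi1 : ∀ j, j < k → 1 ≤ i j := by
    intro j hj
    rcases Nat.eq_zero_or_pos j with h | h
    · subst h; exact h1
    · have := imono 0 j h hj; omega
  -- counting lemmas
  have card_at : ∀ j, j < k →
      ((Finset.range k).filter (fun j' => i j' ≤ i j)).card = j + 1 := by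
    intro j hj
    have : (Finset.range k).filter (fun j' => i j' ≤ i j) = Finset.range (j + 1) := by
      ext x
      simp only [Finset.mem_filter, Finset.mem_range]
      constructor
      · rintro ⟨hxk, hx⟩
        by_contra hc
        have := imono j x (by omega) hxk
        omega
      · intro hx
        refine ⟨by omega, ?_⟩
        rcases Nat.lt_succ_iff_lt_or_eq.mp hx with h | h
        · exact (imono x j h hj).le
        · subst h; exact le_refl _
    rw [this, Finset.card_range]
  have card_before : ∀ j, j < k →
      ((Finset.range k).filter (fun j' => i j' ≤ i j - 1)).card = j := by
    intro j hj
    have hij1 := hi1 j hj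
    have : (Finset.range k).filter (fun j' => i j' ≤ i j - 1) = Finset.range j := by
      ext x
      simp only [Finset.mem_filter, Finset.mem_range]
      constructor
      · rintro ⟨hxk, hx⟩
        by_contra hc
        rcases Nat.lt_or_ge j x with h | h
        · have := imono j x h hxk; omega
        · have : x = j := by omega
          subst this; omega
      · intro hx
        have := imono x j hx hj
        exact ⟨by omega, by omega⟩
    rw [this, Finset.card_range]
  have step : ∀ m, κ (m + 1) - κ m = s m := by
    intro m
    simp only [hκ, Finset.sum_range_succ]
    ring
  have step' : ∀ m, 1 ≤ m → κ m - κ (m - 1) = s (m - 1) := by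
    intro m hm
    have : m = (m - 1) + 1 := by omega
    rw [this] at *
    simpa using step (m - 1)
  refine ⟨κ, ?_, ?_, Or.inl ⟨?_, ?_⟩⟩
  · intro m _ _
    have := step m
    have habs : |s m| = 1 := by
      simp [hs, abs_pow]
    rw [this, habs]
  · simp [hκ]
  · -- even j: sinks
    intro j hj hje
    have hEven : Even j := Nat.even_iff.mpr hje
    have hsa : s (i j) = -1 := by
      rw [hs]
      simp only
      rw [card_at j hj]
      exact (Even.add_one hEven).neg_one_pow
    have hsb : s (i j - 1) = 1 := by
      rw [hs]
      simp only
      rw [card_before j hj]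
      exact hEven.neg_one_pow
    constructor
    · right
      have := step' (i j) (hi1 j hj)
      omega
    · right
      have := step (i j)
      omega
  · -- odd j: sources
    intro j hj hjo
    have hOdd : Odd j := Nat.odd_iff.mpr hjo
    have hsa : s (i j) = 1 := by
      rw [hs]
      simp only
      rw [card_at j hj]
      exact (Odd.add_one hOdd).neg_one_pow
    have hsb : s (i j - 1) = -1 := by
      rw [hs]
      simp only
      rw [card_before j hj]
      exact hOdd.neg_one_pow
    constructor
    · right
      have := step' (i j) (hi1 j hj)
      omega
    · right
      have := step (i j)
      omega
end
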